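/- arXiv:1503.08941 — 6 statements merged into one kernel-verified Lean document; each statement's English description precedes it below -/
import Mathlib

section
/- Let G be a connected graph on n vertices. Then mvc(G) = n if and only if diam(G) ≤ 2. -/
open SimpleGraph

/-- A vertex-coloring `c` of `G` is an MVC-coloring if any two vertices are joined by a
path whose internal vertices all have the same color. -/
def IsMVCColoring {V : Type*} (G : SimpleGraph V) (c : V → ℕ) : Prop :=
  ∀ u v : V, ∃ p : G.Walk u v, p.IsPath ∧
    ∀ x ∈ p.support.tail.dropLast, ∀ y ∈ p.support.tail.dropLast, c x = c y

/-- The monochromatic vertex-connection number: the maximum number of colors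
used in an MVC-coloring of `G`. -/
noncomputable def mvc {V : Type*} (G : SimpleGraph V) : ℕ :=
  sSup {k : ℕ | ∃ c : V → ℕ, IsMVCColoring G c ∧ (Set.range c).ncard = k}

/-! A coloring with `n` colors gives every vertex its own color, so a path whose internal vertices
share a color has at most one internal vertex, i.e. length at most 2; hence `diam G ≤ 2`.
Conversely, if `diam G ≤ 2`, every pair of vertices is joined by a path with at most one internal
vertex, so every coloring, in particular one with `n` distinct colors, is an MVC-coloring. -/

lemma List.length_le_one_of_nodup {α : Type*} {l : List α} (hl : l.Nodup)
    (h : ∀ x ∈ l, ∀ y ∈ l, x = y) : l.length ≤ 1 := by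
  classical
  rw [← List.toFinset_card_of_nodup hl]
  exact Finset.card_le_one.mpr fun x hx y hy => h x (by simpa using hx) y (by simpa using hy)

lemma List.eq_of_mem_of_length_le_one {α : Type*} {l : List α} (hl : l.length ≤ 1) {x y : α}
    (hx : x ∈ l) (hy : y ∈ l) : x = y := by
  match l, hl with
  | [_], _ => simp_all

lemma Set.ncard_range_le {α β : Type*} [Finite α] (f : α → β) :
    (Set.range f).ncard ≤ Nat.card α := by
  rw [← Set.image_univ, ← Set.ncard_univ]
  exact Set.ncard_image_le

lemma Set.ncard_range_eq_iff_injective {α β : Type*} [Finite α] {f : α → β} :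
    (Set.range f).ncard = Nat.card α ↔ f.Injective := by
  rw [← Set.image_univ, ← Set.ncard_univ, Set.ncard_image_iff, Set.injOn_univ]

namespace SimpleGraph

variable {V : Type*} {G : SimpleGraph V}

lemma Walk.length_support_tail_dropLast {u v : V} (p : G.Walk u v) :
    p.support.tail.dropLast.length = p.length - 1 := by
  simp only [List.length_dropLast, List.length_tail, length_support]
  omega

lemma Walk.IsPath.nodup_support_tail_dropLast {u v : V} {p : G.Walk u v} (hp : p.IsPath) :
    p.support.tail.dropLast.Nodup :=
  hp.support_nodup.sublist ((List.dropLast_sublist _).trans (List.tail_sublist _))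

lemma ediam_le_natCast_iff (h : G.ediam ≠ ⊤) {k : ℕ} : G.ediam ≤ k ↔ G.diam ≤ k := by
  rw [← ENat.natCast_toNat h, Nat.cast_le]
  rfl

end SimpleGraph

section

variable {V : Type*} {G : SimpleGraph V}

lemma IsMVCColoring.ediam_le_two {c : V → ℕ} (hc : IsMVCColoring G c) (hinj : c.Injective) :
    G.ediam ≤ 2 := by
  refine ediam_le_iff.mpr fun u v => ?_
  obtain ⟨p, hp, hmono⟩ := hc u v
  have hinternal := List.length_le_one_of_nodup hp.nodup_support_tail_dropLast
    fun x hx y hy => hinj (hmono x hx y hy)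
  have hlen : p.length ≤ 2 := by
    rw [p.length_support_tail_dropLast] at hinternal
    omega
  exact (edist_le p).trans (by exact_mod_cast hlen)

lemma IsMVCColoring.of_ediam_le_two (h : G.ediam ≤ 2) (c : V → ℕ) : IsMVCColoring G c := by
  intro u v
  have hedist : G.edist u v ≤ 2 := ediam_le_iff.mp h u v
  have hreach : G.Reachable u v :=
    reachable_of_edist_ne_top (ne_top_of_le_ne_top (by simp) hedist)
  obtain ⟨p, hp, hlen⟩ := hreach.exists_path_of_dist
  have hdist : G.dist u v ≤ 2 := by
    rw [← Nat.cast_le (α := ℕ∞), hreach.coe_dist_eq_edist]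
    exact hedist
  have hinternal : p.support.tail.dropLast.length ≤ 1 := by
    rw [p.length_support_tail_dropLast]
    omega
  exact ⟨p, hp, fun x hx y hy => congrArg c (List.eq_of_mem_of_length_le_one hinternal hx hy)⟩

lemma mvc_eq_card_iff [Finite V] :
    mvc G = Nat.card V ↔ ∃ c, IsMVCColoring G c ∧ c.Injective := by
  set S := {k : ℕ | ∃ c : V → ℕ, IsMVCColoring G c ∧ (Set.range c).ncard = k}
  have hbdd : ∀ k ∈ S, k ≤ Nat.card V := by
    rintro k ⟨c, -, rfl⟩
    exact Set.ncard_range_le c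
  constructor
  · intro hmvc
    rcases S.eq_empty_or_nonempty with hS | hS
    · have hzero : mvc G = 0 := by
        change sSup S = 0
        rw [hS, csSup_empty, Nat.bot_eq_zero]
      have : IsEmpty V := Finite.card_eq_zero_iff.mp (hmvc ▸ hzero)
      exact ⟨fun _ => 0, isEmptyElim, Function.injective_of_subsingleton _⟩
    · obtain ⟨c, hc, hcard⟩ := Nat.sSup_mem hS ⟨_, hbdd⟩
      exact ⟨c, hc, Set.ncard_range_eq_iff_injective.mp (hcard.trans hmvc)⟩
  · rintro ⟨c, hc, hinj⟩
    exact le_antisymm (csSup_le' hbdd)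
      (le_csSup ⟨_, hbdd⟩ ⟨c, hc, Set.ncard_range_eq_iff_injective.mpr hinj⟩)

end

theorem stmt_3 {V : Type*} [Fintype V] (G : SimpleGraph V) (hG : G.Connected) :
    mvc G = Fintype.card V ↔ G.diam ≤ 2 := by
  have : Nonempty V := hG.nonempty
  rw [← Nat.card_eq_fintype_card, mvc_eq_card_iff,
    ← ediam_le_natCast_iff (G.connected_iff_ediam_ne_top.mp hG)]
  refine ⟨fun ⟨c, hc, hinj⟩ => hc.ediam_le_two hinj, fun h => ?_⟩
  exact ⟨_, IsMVCColoring.of_ediam_le_two h _,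
    Fin.val_injective.comp (Fintype.equivFin V).injective⟩
end

section
/- Let G be a connected graph on n vertices with diameter d ≥ 3. Then mvc(G) ≤ n − d + 2. -/
open SimpleGraph

theorem Set.ncard_range_add_card_le_of_subsingleton_image {α β : Type*} [Fintype α]
    (f : α → β) (s : Finset α) (hs : (f '' s).Subsingleton) :
    (Set.range f).ncard + s.card ≤ Fintype.card α + 1 := by
  classical
  have hrange : Set.range f ⊆ f '' s ∪ f '' (s : Set α)ᶜ := by
    rintro _ ⟨x, rfl⟩
    by_cases hx : x ∈ s
    · exact Or.inl ⟨x, hx, rfl⟩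
    · exact Or.inr ⟨x, hx, rfl⟩
  have hcompl : (f '' (s : Set α)ᶜ).ncard ≤ Fintype.card α - s.card :=
    calc (f '' (s : Set α)ᶜ).ncard ≤ ((s : Set α)ᶜ).ncard := Set.ncard_image_le (Set.toFinite _)
      _ = Fintype.card α - s.card := by
        rw [← Finset.coe_compl, Set.ncard_coe_finset, Finset.card_compl]
  have hcount := calc (Set.range f).ncard ≤ (f '' s ∪ f '' (s : Set α)ᶜ).ncard :=
        Set.ncard_le_ncard hrange (Set.toFinite _)
    _ ≤ (f '' s).ncard + (f '' (s : Set α)ᶜ).ncard := Set.ncard_union_le ..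
    _ ≤ 1 + (Fintype.card α - s.card) :=
        add_le_add (Set.ncard_le_one_iff_subsingleton.mpr hs) hcompl
  have hs_card := s.card_le_univ
  omega

namespace SimpleGraph.Walk

variable {V : Type*} {G : SimpleGraph V}

theorem length_support_tail_dropLast_s4 {u v : V} (p : G.Walk u v) :
    p.support.tail.dropLast.length = p.length - 1 := by
  simp [p.length_support]

theorem IsPath.card_toFinset_support_tail_dropLast [DecidableEq V] {u v : V} {p : G.Walk u v}
    (hp : p.IsPath) : p.support.tail.dropLast.toFinset.card = p.length - 1 := by
  rw [List.toFinset_card_of_nodup, length_support_tail_dropLast_s4]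
  exact (p.support.tail.dropLast_sublist.trans p.support.tail_sublist).nodup hp.support_nodup

end SimpleGraph.Walk

theorem IsMVCColoring.ncard_range_add_dist_le {V : Type*} [Fintype V] {G : SimpleGraph V}
    {c : V → ℕ} (hc : IsMVCColoring G c) (u v : V) :
    (Set.range c).ncard + G.dist u v ≤ Fintype.card V + 2 := by
  classical
  obtain ⟨p, hp, hmono⟩ := hc u v
  have hcolors := Set.ncard_range_add_card_le_of_subsingleton_image c
    p.support.tail.dropLast.toFinset <| by
      rintro _ ⟨x, hx, rfl⟩ _ ⟨y, hy, rfl⟩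
      exact hmono x (List.mem_toFinset.mp hx) y (List.mem_toFinset.mp hy)
  rw [hp.card_toFinset_support_tail_dropLast] at hcolors
  have hdist := G.dist_le p
  omega

theorem stmt_4_general {V : Type*} [Fintype V] (G : SimpleGraph V) (hG : G.Connected)
    (d : ℕ) (hd : G.diam = d) :
    mvc G ≤ Fintype.card V - d + 2 := by
  have : Nonempty V := hG.nonempty
  obtain ⟨u, v, huv⟩ := G.exists_dist_eq_diam
  refine csSup_le' ?_
  rintro _ ⟨c, hc, rfl⟩
  have hcolors := hc.ncard_range_add_dist_le u v
  omega

theorem stmt_4 {V : Type*} [Fintype V] (G : SimpleGraph V) (hG : G.Connected)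
    (d : ℕ) (hd : G.diam = d) (h3 : 3 ≤ d) :
    mvc G ≤ Fintype.card V - d + 2 :=
  stmt_4_general G hG d hd
end

section
/- Fix n and t with 1 ≤ t ≤ n − 5. Let G be the graph obtained from a complete graph on vertices v_1,…,v_{t+2} by deleting the edge v_{t+1}v_{t+2} and replacing it with a path v_{t+2} v_{t+3} … v_n v_{t+1} through n − t − 2 new vertices. Then mvc(G) ≤ t + 2. -/
open SimpleGraph

/-- The graph on vertices `v_1,…,v_n` (0-indexed as `0,…,n-1`) obtained from a complete
graph on `v_1,…,v_{t+2}` (indices `0,…,t+1`) by deleting the edge `v_{t+1}v_{t+2}`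
(indices `t, t+1`) and replacing it with the path
`v_{t+2} v_{t+3} … v_n v_{t+1}` (indices `t+1, t+2, …, n-1, t`). -/
def cliqueMinusEdgeWithPath (n t : ℕ) : SimpleGraph (Fin n) :=
  SimpleGraph.fromRel (fun i j =>
    (i.val < t + 2 ∧ j.val < t + 2 ∧ ¬(i.val = t ∧ j.val = t + 1) ∧
      ¬(i.val = t + 1 ∧ j.val = t)) ∨
    (j.val = i.val + 1 ∧ t + 1 ≤ i.val) ∨ (i.val = n - 1 ∧ j.val = t))

/-!
Write the replaced edge as the path `q 0 = v_{t+2}, q 1, …, q L = v_{t+1}` with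
`L = n - t - 1 ≥ 4`, and call `v_1, …, v_t` the hub. The hub carries at most `t` colors, so it
suffices that at most two colors on the path are not hub colors. The inner vertices of the path
have degree two, so a walk reaching an arc of the path enters it through a neighbouring path
vertex, or through the hub if the arc contains an end of the path. Hence:
* a monochromatic path from the hub to `q k` contains `q 0, …, q (k-1)` or `q (k+1), …, q L`,
  so the coloring of the path is one block, two single vertices and another block;
* a monochromatic path from `q L` to `q 1` runs through `q 2, …, q (L-1)` or goes around
  through `q 0` and the hub, in which case `q 0` has a hub color; symmetrically for `q 0` and
  `q (L-1)`.
A short case analysis on these three facts leaves at most two colors outside the hub.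
-/

section PathColoring
variable {α : Type*} {f : ℕ → α} {L : ℕ}

theorem exists_two_blocks
    (hsplit : ∀ k, 1 ≤ k → k < L →
      (∀ i < k, f i = f 0) ∨ ∀ i, k < i → i ≤ L → f i = f L) (hL : 3 ≤ L) :
    ∃ k, 1 ≤ k ∧ k ≤ L - 2 ∧ (∀ i < k, f i = f 0) ∧ ∀ i, k + 1 < i → i ≤ L → f i = f L := by
  classical
  set P : ℕ → Prop := fun k => ∀ i < k, f i = f 0
  have hP1 : P 1 := fun i hi => by rw [Nat.lt_one_iff.1 hi]
  set k := Nat.findGreatest P (L - 2)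
  refine ⟨k, Nat.le_findGreatest (by omega) hP1, Nat.findGreatest_le _,
    Nat.findGreatest_spec (by omega) hP1, fun i hi hiL => ?_⟩
  rcases Nat.lt_or_ge k (L - 2) with hk | hk
  · have hnext : ¬ P (k + 1) := Nat.findGreatest_is_greatest (Nat.lt_succ_self k) (by omega)
    exact ((hsplit (k + 1) (by omega) (by omega)).resolve_left hnext) i hi hiL
  · obtain rfl : i = L := by omega
    rfl

theorem exists_two_values_of_split (S : Set α)
    (hsplit : ∀ k, 1 ≤ k → k < L →
      (∀ i < k, f i = f 0) ∨ ∀ i, k < i → i ≤ L → f i = f L)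
    (hleft : (∀ i, 2 ≤ i → i < L → f i = f (L - 1)) ∨ f 0 ∈ S)
    (hright : (∀ i, 1 ≤ i → i < L - 1 → f i = f 1) ∨ f L ∈ S) (hL : 4 ≤ L) :
    ∃ a b, ∀ i ≤ L, f i ∈ S ∨ f i = a ∨ f i = b := by
  obtain ⟨k, hk1, hk2, hlow, hhigh⟩ := exists_two_blocks hsplit (by omega)
  rcases hleft with hmid | h0 <;> rcases hright with hmid' | hL'
  · rcases Nat.lt_or_ge 1 k with hk | hk
    · refine ⟨f 0, f L, fun i hi => ?_⟩
      grind
    · refine ⟨f 0, f 1, fun i hi => ?_⟩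
      grind
  · rcases Nat.lt_or_ge 1 k with hk | hk
    · refine ⟨f 0, f (L - 1), fun i hi => ?_⟩
      grind
    · refine ⟨f 0, f 1, fun i hi => ?_⟩
      grind
  · rcases Nat.lt_or_ge k (L - 2) with hk | hk
    · refine ⟨f 1, f L, fun i hi => ?_⟩
      grind
    · refine ⟨f (L - 1), f L, fun i hi => ?_⟩
      grind
  · exact ⟨f k, f (k + 1), fun i hi => by grind⟩

end PathColoring

namespace SimpleGraph.Walk
variable {V : Type*} {G : SimpleGraph V}

theorem mem_support_tail_dropLast {u v x : V} (p : G.Walk u v) (hx : x ∈ p.support)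
    (hxu : x ≠ u) (hxv : x ≠ v) : x ∈ p.support.tail.dropLast := by
  cases p with
  | nil => exact absurd (by simpa using hx) hxu
  | cons _ q =>
    refine List.mem_dropLast_of_mem_of_ne_getLast ?_ ?_
    · simpa [hxu] using hx
    · simpa [q.getLast_support] using hxv

theorem exists_mem_support_adj_of_notMem {u v : V} (p : G.Walk u v) {S : Set V} (hu : u ∉ S)
    (hv : v ∈ S) : ∃ w ∈ p.support, w ∉ S ∧ ∃ s ∈ S, G.Adj w s := by
  obtain ⟨d, hd, hfst, hsnd⟩ := p.exists_boundary_dart Sᶜ hu (by simpa using hv)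
  exact ⟨d.fst, p.dart_fst_mem_support_of_mem_darts hd, hfst, d.snd, by simpa using hsnd, d.adj⟩

end SimpleGraph.Walk

theorem IsMVCColoring.exists_walk {V : Type*} {G : SimpleGraph V} {c : V → ℕ}
    (hc : IsMVCColoring G c) (u v : V) :
    ∃ p : G.Walk u v, ∀ x ∈ p.support, ∀ y ∈ p.support,
      x ≠ u → x ≠ v → y ≠ u → y ≠ v → c x = c y := by
  obtain ⟨p, -, hmono⟩ := hc u v
  exact ⟨p, fun x hx y hy hxu hxv hyu hyv =>
    hmono x (p.mem_support_tail_dropLast hx hxu hxv) y (p.mem_support_tail_dropLast hy hyu hyv)⟩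

namespace CliqueMinusEdgeWithPath
variable {n t : ℕ} (hn : t + 2 ≤ n)

/-- `q k`: the path `t+1, t+2, …, n-1, t` replacing the deleted edge, indexed by `0, …, n-t-1`. -/
def pathVertex (k : ℕ) : Fin n :=
  ⟨if t + 1 + k < n then t + 1 + k else t, by split <;> omega⟩

theorem pathVertex_val (k : ℕ) :
    (pathVertex hn k).val = if t + 1 + k < n then t + 1 + k else t := rfl

theorem le_pathVertex_val (k : ℕ) : t ≤ (pathVertex hn k).val := by
  rw [pathVertex_val]; split <;> omega

theorem pathVertex_inj {i j : ℕ} (hi : i ≤ n - t - 1) (hj : j ≤ n - t - 1) :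
    pathVertex hn i = pathVertex hn j ↔ i = j := by
  refine ⟨fun h => ?_, congrArg _⟩
  have := congrArg Fin.val h
  simp only [pathVertex_val] at this
  split_ifs at this <;> omega

theorem exists_pathVertex_eq {v : Fin n} (hv : t ≤ v.val) :
    ∃ k ≤ n - t - 1, pathVertex hn k = v := by
  by_cases h : v.val = t
  · exact ⟨n - t - 1, le_rfl, Fin.ext (by rw [pathVertex_val, if_neg (by omega), h])⟩
  · exact ⟨v.val - t - 1, by omega, Fin.ext (by rw [pathVertex_val, if_pos (by omega)]; omega)⟩

theorem adj_pathVertex {l : ℕ} (hl : l ≤ n - t - 1) {w : Fin n}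
    (h : (cliqueMinusEdgeWithPath n t).Adj (pathVertex hn l) w) :
    (w.val < t ∧ (l = 0 ∨ l = n - t - 1)) ∨ (1 ≤ l ∧ w = pathVertex hn (l - 1)) ∨
      (l < n - t - 1 ∧ w = pathVertex hn (l + 1)) := by
  have := w.isLt
  simp only [cliqueMinusEdgeWithPath, fromRel_adj, ne_eq, Fin.ext_iff, pathVertex_val] at h ⊢
  split_ifs at h ⊢ <;> omega

theorem pathVertex_ne {i j : ℕ} (hi : i ≤ n - t - 1) (hj : j ≤ n - t - 1) (hij : i ≠ j) :
    pathVertex hn i ≠ pathVertex hn j :=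
  mt (pathVertex_inj hn hi hj).1 hij

theorem pathVertex_ne_of_lt {w : Fin n} (hw : w.val < t) (k : ℕ) : pathVertex hn k ≠ w :=
  fun h => by have := le_pathVertex_val hn k; rw [h] at this; omega

theorem exists_mem_support_near_arc {u : Fin n} {lo l hi : ℕ}
    (p : (cliqueMinusEdgeWithPath n t).Walk u (pathVertex hn l)) (hlo : lo ≤ l) (hl : l ≤ hi)
    (hhi : hi ≤ n - t - 1) (hu : ∀ k, lo ≤ k → k ≤ hi → u ≠ pathVertex hn k) :
    ∃ w ∈ p.support, (w.val < t ∧ (lo = 0 ∨ hi = n - t - 1)) ∨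
      (1 ≤ lo ∧ w = pathVertex hn (lo - 1)) ∨ (hi < n - t - 1 ∧ w = pathVertex hn (hi + 1)) := by
  obtain ⟨w, hw, hwS, _, ⟨k, hk1, hk2, rfl⟩, hadj⟩ :=
    p.exists_mem_support_adj_of_notMem (S := {w | ∃ k, lo ≤ k ∧ k ≤ hi ∧ w = pathVertex hn k})
      (fun ⟨k, hk1, hk2, hk⟩ => hu k hk1 hk2 hk) ⟨l, hlo, hl, rfl⟩
  replace hwS : ∀ k, lo ≤ k → k ≤ hi → w ≠ pathVertex hn k := fun k h1 h2 h => hwS ⟨k, h1, h2, h⟩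
  refine ⟨w, hw, ?_⟩
  rcases adj_pathVertex hn (by omega) hadj.symm with ⟨hwt, hk⟩ | ⟨hk, rfl⟩ | ⟨hk, rfl⟩
  · exact .inl ⟨hwt, by omega⟩
  · have : ¬ lo ≤ k - 1 := fun h => hwS _ h (by omega) rfl
    exact .inr (.inl ⟨by omega, by congr 1; omega⟩)
  · have : ¬ k + 1 ≤ hi := fun h => hwS _ (by omega) h rfl
    exact .inr (.inr ⟨by omega, by congr 1; omega⟩)

theorem pathVertex_mem_support_of_hub {u : Fin n} {k : ℕ} (hu : u.val < t)
    (p : (cliqueMinusEdgeWithPath n t).Walk u (pathVertex hn k)) :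
    (∀ i < k, pathVertex hn i ∈ p.support) ∨
      ∀ i, k < i → i ≤ n - t - 1 → pathVertex hn i ∈ p.support := by
  by_contra! ⟨⟨i, hik, hi⟩, ⟨j, hkj, hjL, hj⟩⟩
  obtain ⟨w, hw, ⟨-, h⟩ | ⟨-, rfl⟩ | ⟨-, rfl⟩⟩ := exists_mem_support_near_arc hn p
    (lo := i + 1) (hi := j - 1) (by omega) (by omega) (by omega)
    (fun k _ _ => (pathVertex_ne_of_lt hn hu k).symm)
  · omega
  · exact hi hw
  · exact hj (by simpa [Nat.sub_add_cancel (by omega : 1 ≤ j)] using hw)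

theorem pathVertex_zero_mem_support_of_notMem {j : ℕ} (hj : 2 ≤ j) (hjL : j < n - t - 1)
    (p : (cliqueMinusEdgeWithPath n t).Walk (pathVertex hn (n - t - 1)) (pathVertex hn 1))
    (hpj : pathVertex hn j ∉ p.support) :
    pathVertex hn 0 ∈ p.support ∧ ∃ a ∈ p.support, a.val < t := by
  have hu (lo : ℕ) : ∀ k, lo ≤ k → k ≤ j - 1 → pathVertex hn (n - t - 1) ≠ pathVertex hn k :=
    fun k _ _ h => absurd ((pathVertex_inj hn le_rfl (by omega)).1 h) (by omega)
  have hj' : pathVertex hn (j - 1 + 1) = pathVertex hn j := by rw [Nat.sub_add_cancel (by omega)]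
  constructor
  · obtain ⟨w, hw, ⟨-, h⟩ | ⟨-, rfl⟩ | ⟨-, rfl⟩⟩ := exists_mem_support_near_arc hn p
      (lo := 1) (hi := j - 1) le_rfl (by omega) (by omega) (hu 1)
    · omega
    · exact hw
    · exact absurd (hj' ▸ hw) hpj
  · obtain ⟨w, hw, ⟨hwt, -⟩ | ⟨h, -⟩ | ⟨-, rfl⟩⟩ := exists_mem_support_near_arc hn p
      (lo := 0) (hi := j - 1) (Nat.zero_le _) (by omega) (by omega) (hu 0)
    · exact ⟨w, hw, hwt⟩
    · omega
    · exact absurd (hj' ▸ hw) hpj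

theorem pathVertex_last_mem_support_of_notMem {i : ℕ} (hi1 : 1 ≤ i) (hi : i < n - t - 2)
    (p : (cliqueMinusEdgeWithPath n t).Walk (pathVertex hn 0) (pathVertex hn (n - t - 2)))
    (hpi : pathVertex hn i ∉ p.support) :
    pathVertex hn (n - t - 1) ∈ p.support ∧ ∃ a ∈ p.support, a.val < t := by
  have hu {top : ℕ} (htop : top ≤ n - t - 1) :
      ∀ k, i + 1 ≤ k → k ≤ top → pathVertex hn 0 ≠ pathVertex hn k :=
    fun k _ _ h => absurd ((pathVertex_inj hn (Nat.zero_le _) (by omega)).1 h) (by omega)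
  constructor
  · obtain ⟨w, hw, ⟨-, h⟩ | ⟨-, rfl⟩ | ⟨-, rfl⟩⟩ := exists_mem_support_near_arc hn p
      (lo := i + 1) (hi := n - t - 2) (by omega) le_rfl (by omega) (hu (by omega))
    · omega
    · exact absurd hw hpi
    · rwa [show n - t - 2 + 1 = n - t - 1 by omega] at hw
  · obtain ⟨w, hw, ⟨hwt, -⟩ | ⟨-, rfl⟩ | ⟨h, -⟩⟩ := exists_mem_support_near_arc hn p
      (lo := i + 1) (hi := n - t - 1) (by omega) (by omega) le_rfl (hu le_rfl)
    · exact ⟨w, hw, hwt⟩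
    · exact absurd hw hpi
    · omega

section Coloring
variable {c : Fin n → ℕ} (hc : IsMVCColoring (cliqueMinusEdgeWithPath n t) c)
include hc

theorem color_pathVertex_split (ht : 1 ≤ t) {k : ℕ} (hk1 : 1 ≤ k) (hk2 : k < n - t - 1) :
    (∀ i < k, c (pathVertex hn i) = c (pathVertex hn 0)) ∨
      ∀ i, k < i → i ≤ n - t - 1 → c (pathVertex hn i) = c (pathVertex hn (n - t - 1)) := by
  let hub : Fin n := ⟨0, by omega⟩
  have hhub : hub.val < t := ht
  obtain ⟨p, hmono⟩ := hc.exists_walk hub (pathVertex hn k)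
  have heq {i j : ℕ} (hi : i ≤ n - t - 1) (hj : j ≤ n - t - 1) (hik : i ≠ k) (hjk : j ≠ k)
      (hpi : pathVertex hn i ∈ p.support) (hpj : pathVertex hn j ∈ p.support) :
      c (pathVertex hn i) = c (pathVertex hn j) :=
    hmono _ hpi _ hpj (pathVertex_ne_of_lt hn hhub i) (pathVertex_ne hn hi (by omega) hik)
      (pathVertex_ne_of_lt hn hhub j) (pathVertex_ne hn hj (by omega) hjk)
  rcases pathVertex_mem_support_of_hub hn hhub p with h | h
  · exact .inl fun i hi =>
      heq (by omega) (by omega) (by omega) (by omega) (h i hi) (h 0 (by omega))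
  · exact .inr fun i hi hiL =>
      heq hiL le_rfl (by omega) (by omega) (h i hi hiL) (h _ hk2 le_rfl)

theorem color_pathVertex_zero_mem_or (hL : 3 ≤ n - t - 1) :
    (∀ i, 2 ≤ i → i < n - t - 1 → c (pathVertex hn i) = c (pathVertex hn (n - t - 2))) ∨
      c (pathVertex hn 0) ∈ c '' {v | v.val < t} := by
  obtain ⟨p, hmono⟩ := hc.exists_walk (pathVertex hn (n - t - 1)) (pathVertex hn 1)
  by_cases hall : ∀ i, 2 ≤ i → i < n - t - 1 → pathVertex hn i ∈ p.support
  · refine .inl fun i hi hiL => hmono _ (hall i hi hiL) _ (hall _ (by omega) (by omega)) ?_ ?_ ?_ ?_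
    all_goals exact pathVertex_ne hn (by omega) (by omega) (by omega)
  · push Not at hall
    obtain ⟨j, hj, hjL, hpj⟩ := hall
    obtain ⟨h0, a, ha, hat⟩ := pathVertex_zero_mem_support_of_notMem hn hj hjL p hpj
    refine .inr ⟨a, hat, hmono _ ha _ h0 (pathVertex_ne_of_lt hn hat _).symm
      (pathVertex_ne_of_lt hn hat _).symm ?_ ?_⟩
    all_goals exact pathVertex_ne hn (by omega) (by omega) (by omega)

theorem color_pathVertex_last_mem_or (hL : 3 ≤ n - t - 1) :
    (∀ i, 1 ≤ i → i < n - t - 2 → c (pathVertex hn i) = c (pathVertex hn 1)) ∨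
      c (pathVertex hn (n - t - 1)) ∈ c '' {v | v.val < t} := by
  obtain ⟨p, hmono⟩ := hc.exists_walk (pathVertex hn 0) (pathVertex hn (n - t - 2))
  by_cases hall : ∀ i, 1 ≤ i → i < n - t - 2 → pathVertex hn i ∈ p.support
  · refine .inl fun i hi hiL => hmono _ (hall i hi hiL) _ (hall 1 le_rfl (by omega)) ?_ ?_ ?_ ?_
    all_goals exact pathVertex_ne hn (by omega) (by omega) (by omega)
  · push Not at hall
    obtain ⟨i, hi, hiL, hpi⟩ := hall
    obtain ⟨hL, a, ha, hat⟩ := pathVertex_last_mem_support_of_notMem hn hi hiL p hpi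
    refine .inr ⟨a, hat, hmono _ ha _ hL (pathVertex_ne_of_lt hn hat _).symm
      (pathVertex_ne_of_lt hn hat _).symm ?_ ?_⟩
    all_goals exact pathVertex_ne hn (by omega) (by omega) (by omega)

theorem exists_two_colors_on_path (ht : 1 ≤ t) (hn5 : t + 5 ≤ n) :
    ∃ a b, ∀ k ≤ n - t - 1, c (pathVertex hn k) ∈ c '' {v | v.val < t} ∨
      c (pathVertex hn k) = a ∨ c (pathVertex hn k) = b := by
  have hL : n - t - 1 - 1 = n - t - 2 := by omega
  refine exists_two_values_of_split (f := fun k => c (pathVertex hn k)) _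
    (fun k hk1 hk2 => color_pathVertex_split hn hc ht hk1 hk2) ?_ ?_ (by omega)
  · simpa only [hL] using color_pathVertex_zero_mem_or hn hc (by omega)
  · simpa only [hL] using color_pathVertex_last_mem_or hn hc (by omega)

end Coloring

end CliqueMinusEdgeWithPath

theorem Fin.ncard_setOf_val_lt {n t : ℕ} (h : t ≤ n) : {v : Fin n | v.val < t}.ncard = t := by
  rw [Set.ncard_eq_toFinset_card']
  simp [Fin.card_filter_val_lt, h]

theorem stmt_7 (n t : ℕ) (h1 : 1 ≤ t) (h2 : t ≤ n - 5) :
    mvc (cliqueMinusEdgeWithPath n t) ≤ t + 2 := by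
  have hn : t + 2 ≤ n := by omega
  refine csSup_le' ?_
  rintro _ ⟨c, hc, rfl⟩
  obtain ⟨a, b, hab⟩ := CliqueMinusEdgeWithPath.exists_two_colors_on_path hn hc h1 (by omega)
  have hrange : Set.range c ⊆ c '' {v | v.val < t} ∪ {a, b} := by
    rintro _ ⟨v, rfl⟩
    by_cases hv : v.val < t
    · exact .inl ⟨v, hv, rfl⟩
    · obtain ⟨k, hk, rfl⟩ := CliqueMinusEdgeWithPath.exists_pathVertex_eq hn (not_lt.1 hv)
      rcases hab k hk with h | h | h
      · exact .inl h
      · exact .inr (.inl h)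
      · exact .inr (.inr h)
  calc (Set.range c).ncard
      ≤ (c '' {v | v.val < t}).ncard + ({a, b} : Set ℕ).ncard :=
        (Set.ncard_le_ncard hrange (Set.toFinite _)).trans (Set.ncard_union_le _ _)
    _ ≤ t + 2 := by
        gcongr
        · exact (Set.ncard_image_le (Set.toFinite _)).trans (Fin.ncard_setOf_val_lt (by omega)).le
        · exact (Set.ncard_insert_le a {b}).trans (by simp)
end

section
/- Let G be a connected graph with n vertices and m = n − 1 + C(n−2,2) edges (i.e., p = m − n + 1 = C(n−2,2) and t = n − 3). Then mvc(G) = n. -/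
open SimpleGraph

/-
If two distinct non-adjacent vertices `u`, `v` had no common neighbour, every `w ≠ u` would give
a non-edge (`s(w, v)` when `w` is adjacent to `u`, `s(u, w)` otherwise), and these `n - 1`
non-edges are distinct; so `G` would have at most `C(n, 2) - (n - 1) = C(n - 1, 2)` edges, fewer
than `n - 1 + C(n - 2, 2)`. Hence any two vertices are joined by a path with at most one internal
vertex, every colouring is an MVC-colouring, and an injective colouring uses all `n` colours.
-/

namespace SimpleGraph

open Finset

variable {V : Type*} (G : SimpleGraph V)

theorem card_edgeFinset_le_choose_of_no_common_neighbor [Fintype V] [DecidableEq V]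
    [DecidableRel G.Adj] {u v : V} (huv : u ≠ v) (hnadj : ¬G.Adj u v)
    (hnc : ∀ w, G.Adj u w → ¬G.Adj w v) :
    #G.edgeFinset ≤ (Fintype.card V - 1).choose 2 := by
  let nonEdge : V → Sym2 V := fun w => if G.Adj u w then s(w, v) else s(u, w)
  have hmaps :
      ∀ w ∈ univ.erase u, nonEdge w ∈ (⊤ : SimpleGraph V).edgeFinset \ G.edgeFinset := by
    intro w hw
    have hwu : w ≠ u := ne_of_mem_erase hw
    by_cases huw : G.Adj u w
    · have hwv : w ≠ v := by rintro rfl; exact hnadj huw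
      simp [nonEdge, huw, hwv, hnc w huw]
    · simp [nonEdge, huw, hwu.symm]
  have hinj : Set.InjOn nonEdge (univ.erase u) := by
    intro w hw w' hw' h
    have hwu : w ≠ u := ne_of_mem_erase hw
    have hw'u : w' ≠ u := ne_of_mem_erase hw'
    by_cases huw : G.Adj u w <;> by_cases huw' : G.Adj u w' <;>
      simp [nonEdge, huw, huw'] at h <;> aesop
  have hcount := card_le_card_of_injOn nonEdge hmaps hinj
  rw [card_erase_of_mem (mem_univ u), card_univ,
    card_sdiff_of_subset (edgeFinset_mono le_top), card_edgeFinset_top_eq_card_choose_two] at hcount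
  have htotal := G.card_edgeFinset_le_card_choose_two
  obtain ⟨k, hk⟩ : ∃ k, Fintype.card V = k + 1 :=
    Nat.exists_eq_add_one.mpr (Fintype.card_pos_iff.mpr ⟨u⟩)
  have hpascal : (k + 1).choose 2 = k + k.choose 2 := by
    rw [Nat.choose_succ_succ', Nat.choose_one_right]
  rw [hk, hpascal] at hcount htotal
  rw [hk, Nat.add_sub_cancel]
  omega

theorem isMVCColoring_of_forall_exists_common_neighbor
    (hcn : ∀ u v, u ≠ v → ¬G.Adj u v → ∃ w, G.Adj u w ∧ G.Adj w v) (c : V → ℕ) :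
    IsMVCColoring G c := by
  intro u v
  rcases eq_or_ne u v with rfl | huv
  · exact ⟨.nil, .nil, by simp⟩
  by_cases hadj : G.Adj u v
  · exact ⟨.cons hadj .nil, by simp [Walk.isPath_def, huv], by simp⟩
  obtain ⟨w, huw, hwv⟩ := hcn u v huv hadj
  refine ⟨.cons huw (.cons hwv .nil), by simp [Walk.isPath_def, huv, huw.ne, hwv.ne], ?_⟩
  simp

theorem mvc_eq_card_of_forall_isMVCColoring [Fintype V] (h : ∀ c, IsMVCColoring G c) :
    mvc G = Fintype.card V := by
  refine IsGreatest.csSup_eq ⟨⟨Fin.val ∘ Fintype.equivFin V, h _, ?_⟩, ?_⟩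
  · rw [Set.ncard_range_of_injective (Fin.val_injective.comp (Fintype.equivFin V).injective),
      Nat.card_eq_fintype_card]
  · rintro k ⟨c, -, rfl⟩
    rw [← Nat.card_eq_fintype_card, ← Nat.card_coe_set_eq]
    exact Finite.card_range_le c

end SimpleGraph

theorem stmt_10_general {V : Type*} [Fintype V] (G : SimpleGraph V)
    (n : ℕ) (hn : Fintype.card V = n) (hn3 : 3 ≤ n)
    (hm : G.edgeSet.ncard = n - 1 + (n - 2).choose 2) :
    mvc G = n := by
  classical
  obtain ⟨k, rfl⟩ : ∃ k, n = k + 2 := ⟨n - 2, by omega⟩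
  have hpascal : (k + 1).choose 2 = k + k.choose 2 := by
    rw [Nat.choose_succ_succ', Nat.choose_one_right]
  have hdense : (Fintype.card V - 1).choose 2 < G.edgeFinset.card := by
    rw [← coe_edgeFinset, Set.ncard_coe_finset, Nat.add_sub_cancel] at hm
    rw [hm, hn, show k + 2 - 1 = k + 1 by omega, hpascal]
    omega
  rw [← hn]
  refine G.mvc_eq_card_of_forall_isMVCColoring
    (G.isMVCColoring_of_forall_exists_common_neighbor ?_)
  intro u v huv hnadj
  by_contra! hnc
  exact (G.card_edgeFinset_le_choose_of_no_common_neighbor huv hnadj hnc).not_gt hdense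

theorem stmt_10 {V : Type*} [Fintype V] (G : SimpleGraph V) (hG : G.Connected)
    (n : ℕ) (hn : Fintype.card V = n) (hn3 : 3 ≤ n)
    (hm : G.edgeSet.ncard = n - 1 + (n - 2).choose 2) :
    mvc G = n :=
  stmt_10_general G n hn hn3 hm
end

section
/- For n ≥ 3, f_v(n,3) = n − 1; that is, every connected graph on n vertices satisfies mvc(G) ≥ 3, and n − 1 is the minimum possible number of edges of a connected graph. -/
/-!
Take a spanning tree `T` of `G` and two distinct leaves `a`, `b` of `T`. A leaf is never an
internal vertex of a path, so every path of `T` has all its internal vertices outside `{a, b}`;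
colouring `a` and `b` with colours of their own and everything else with a third colour is
therefore an MVC-colouring of `T`, hence of `G`, and it uses three colours once `n ≥ 3`.
The edge count is that of a spanning tree: a connected graph on `n` vertices has at least
`n - 1` edges, and its spanning trees have exactly `n - 1`.
-/

open SimpleGraph

section MVC

variable {V : Type*} {G H : SimpleGraph V} {c : V → ℕ}

lemma IsMVCColoring.mono (hGH : G ≤ H) (hc : IsMVCColoring G c) :
    IsMVCColoring H c := by
  intro u v
  obtain ⟨p, hp, hmono⟩ := hc u v
  exact ⟨p.mapLe hGH, hp.mapLe hGH, by simpa using hmono⟩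

lemma ncard_range_le_mvc [Finite V] (hc : IsMVCColoring G c) :
    (Set.range c).ncard ≤ mvc G := by
  refine le_csSup ⟨Nat.card V, ?_⟩ ⟨c, hc, rfl⟩
  rintro _ ⟨c', -, rfl⟩
  exact Finite.card_range_le c'

end MVC

namespace SimpleGraph

variable {V : Type*} {G : SimpleGraph V}

lemma Walk.IsPath.ne_and_ne_of_mem_tail_dropLast_support {u v x : V} {p : G.Walk u v}
    (hp : p.IsPath) (hx : x ∈ p.support.tail.dropLast) : x ≠ u ∧ x ≠ v := by
  have hnodup := hp.support_nodup
  constructor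
  · rintro rfl
    rw [← p.cons_tail_support, List.nodup_cons] at hnodup
    exact hnodup.1 (List.dropLast_subset _ hx)
  · rintro rfl
    rw [← List.tail_dropLast] at hx
    rw [← p.dropLast_support_concat, List.nodup_append] at hnodup
    exact hnodup.2.2 x (List.mem_of_mem_tail hx) x (List.mem_singleton_self x) rfl

lemma neighborSet_subsingleton_of_degree_eq_one {v : V} [Fintype (G.neighborSet v)]
    (hv : G.degree v = 1) : (G.neighborSet v).Subsingleton := fun _ hx _ hy =>
  (degree_eq_one_iff_existsUnique_adj.mp hv).unique hx hy

lemma Preconnected.isMVCColoring_of_forall_not_subsingleton (hG : G.Preconnected) {c : V → ℕ}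
    {k : ℕ} (hc : ∀ x, ¬(G.neighborSet x).Subsingleton → c x = k) : IsMVCColoring G c := by
  intro u v
  obtain ⟨p, hp⟩ := hG.exists_isPath u v
  have hinternal : ∀ x ∈ p.support.tail.dropLast, c x = k := fun x hx => by
    obtain ⟨hxu, hxv⟩ := hp.ne_and_ne_of_mem_tail_dropLast_support hx
    exact hc x fun hleaf => hp.isTrail.not_mem_support_of_subsingleton_neighborSet hxu hxv hleaf
      (List.mem_of_mem_tail (List.dropLast_subset _ hx))
  exact ⟨p, hp, fun x hx y hy => (hinternal x hx).trans (hinternal y hy).symm⟩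

lemma Connected.three_le_mvc [Finite V] (hV : 3 ≤ Nat.card V) (hG : G.Connected) :
    3 ≤ mvc G := by
  classical
  have := Fintype.ofFinite V
  have : Nontrivial V := Finite.one_lt_card_iff_nontrivial.mp (by omega)
  obtain ⟨T, hTG, hT⟩ := hG.exists_isTree_le
  obtain ⟨a, b, hab, ha, hb⟩ := hT.exists_ne_and_degree_eq_one
  obtain ⟨z, hz⟩ : ({a, b} : Set V)ᶜ.Nonempty := by
    rw [Set.nonempty_compl]
    intro hV'
    have := Set.ncard_pair hab
    rw [hV', Set.ncard_univ] at this
    omega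
  obtain ⟨hza, hzb⟩ : z ≠ a ∧ z ≠ b := by simpa [not_or] using hz
  let c : V → ℕ := fun x => if x = a then 1 else if x = b then 2 else 0
  have hc : IsMVCColoring T c := by
    refine hT.connected.preconnected.isMVCColoring_of_forall_not_subsingleton (k := 0)
      fun x hx => ?_
    have hxa : x ≠ a := by rintro rfl; exact hx (neighborSet_subsingleton_of_degree_eq_one ha)
    have hxb : x ≠ b := by rintro rfl; exact hx (neighborSet_subsingleton_of_degree_eq_one hb)
    simp [c, hxa, hxb]
  have hrange : {0, 1, 2} ⊆ Set.range c := by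
    rintro _ (rfl | rfl | rfl)
    exacts [⟨z, by simp [c, hza, hzb]⟩, ⟨a, by simp [c]⟩, ⟨b, by simp [c, hab.symm]⟩]
  calc 3 = ({0, 1, 2} : Set ℕ).ncard := by simp
    _ ≤ (Set.range c).ncard := Set.ncard_le_ncard hrange (Set.finite_range c)
    _ ≤ mvc G := ncard_range_le_mvc (hc.mono hTG)

lemma isLeast_ncard_edgeSet_connected [Finite V] [Nonempty V] :
    IsLeast {m | ∃ G : SimpleGraph V, G.Connected ∧ G.edgeSet.ncard = m} (Nat.card V - 1) := by
  refine ⟨?_, ?_⟩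
  · obtain ⟨T, -, hT⟩ := (connected_top (V := V)).exists_isTree_le
    refine ⟨T, hT.connected, ?_⟩
    have := (isTree_iff_connected_and_card.mp hT).2
    rw [Nat.card_coe_set_eq] at this
    omega
  · rintro _ ⟨G, hG, rfl⟩
    have := hG.card_vert_le_card_edgeSet_add_one
    rw [Nat.card_coe_set_eq] at this
    omega

end SimpleGraph

theorem stmt_13 (n : ℕ) (hn : 3 ≤ n) :
    (∀ G : SimpleGraph (Fin n), G.Connected → 3 ≤ mvc G) ∧
    IsLeast {m : ℕ | ∃ G : SimpleGraph (Fin n), G.Connected ∧ G.edgeSet.ncard = m}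
      (n - 1) := by
  have : Nonempty (Fin n) := ⟨⟨0, by omega⟩⟩
  refine ⟨fun G hG => hG.three_le_mvc (by simpa using hn), ?_⟩
  simpa using isLeast_ncard_edgeSet_connected (V := Fin n)
end

section
/- In any MVC-coloring of a connected graph G that uses the maximum number mvc(G) of colors, for every color c the set of vertices colored c induces a connected subgraph of G. -/
open SimpleGraph

/-!
If a color class of an MVC-coloring `c` induces a disconnected subgraph, give one of its
components a color not used by `c`. The internal vertices of any connecting path form a
monochromatic walk, so either they avoid that component or they lie inside a single component of
their color class; either way they stay monochromatic. The recolored coloring is still an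
MVC-coloring and uses one more color, contradicting maximality.
-/

lemma List.IsChain.apply_eq_of_mem {α β : Type*} {f : α → β} {l : List α}
    (hl : l.IsChain fun x y => f x = f y) : ∀ x ∈ l, ∀ y ∈ l, f x = f y := by
  intro x hx y hy
  obtain rfl | hxy := eq_or_ne x y
  · rfl
  · exact (List.isChain_iff_pairwise.mp hl).forall hx hy hxy

lemma SimpleGraph.Walk.isChain_adj_support_tail_dropLast {V : Type*} {G : SimpleGraph V}
    {u v : V} (p : G.Walk u v) : p.support.tail.dropLast.IsChain G.Adj :=
  p.isChain_adj_support.tail.prefix (List.dropLast_prefix _)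

namespace IsMVCColoring

variable {V : Type*} {G : SimpleGraph V} {c : V → ℕ}

lemma recolor (hc : IsMVCColoring G c) {P : V → Prop} [DecidablePred P]
    (hP : ∀ x y, G.Adj x y → c x = c y → P x → P y) (new : ℕ) :
    IsMVCColoring G fun v => if P v then new else c v := by
  intro u v
  obtain ⟨p, hp, hmono⟩ := hc u v
  refine ⟨p, hp, List.IsChain.apply_eq_of_mem ?_⟩
  refine (List.IsChain.iff_mem.mp p.isChain_adj_support_tail_dropLast).imp ?_
  rintro x y ⟨hx, hy, hxy⟩
  have hcxy : c x = c y := hmono x hx y hy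
  have hPxy : P x ↔ P y := ⟨hP x y hxy hcxy, hP y x hxy.symm hcxy.symm⟩
  simp only [hPxy, hcxy]

lemma ncard_range_le_mvc [Finite V] (hc : IsMVCColoring G c) : (Set.range c).ncard ≤ mvc G := by
  refine le_csSup ⟨Nat.card V, ?_⟩ ⟨c, hc, rfl⟩
  rintro k ⟨c', -, rfl⟩
  rw [← Set.image_univ]
  exact (Set.ncard_image_le Set.finite_univ).trans (Set.ncard_univ V).le

lemma exists_ncard_range_lt [Finite V] (hc : IsMVCColoring G c) {col : ℕ}
    (hcol : ¬ (G.induce {v | c v = col}).Preconnected) :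
    ∃ c' : V → ℕ, IsMVCColoring G c' ∧ (Set.range c).ncard < (Set.range c').ncard := by
  classical
  obtain ⟨a, b, hab⟩ : ∃ a b, ¬ (G.induce {v | c v = col}).Reachable a b := by
    simpa [Preconnected] using hcol
  obtain ⟨new, hnew⟩ := (Set.finite_range c).exists_notMem
  let P : V → Prop := fun v => ∃ h : c v = col, (G.induce {v | c v = col}).Reachable a ⟨v, h⟩
  have hP : ∀ x y, G.Adj x y → c x = c y → P x → P y := by
    rintro x y hxy hcxy ⟨hx, hax⟩
    have hy : c y = col := hcxy ▸ hx
    exact ⟨hy, hax.trans (show (G.induce _).Adj ⟨x, hx⟩ ⟨y, hy⟩ from hxy).reachable⟩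
  have hPa : P a := ⟨a.2, .rfl⟩
  have hPb : ¬ P b := fun ⟨_, hr⟩ => hab hr
  refine ⟨_, hc.recolor hP new, Set.ncard_lt_ncard ?_ (Set.finite_range _)⟩
  refine (Set.ssubset_iff_of_subset ?_).mpr ⟨new, ⟨a, if_pos hPa⟩, hnew⟩
  rintro _ ⟨v, rfl⟩
  by_cases hPv : P v
  · exact ⟨b, (if_neg hPb).trans (b.2.trans hPv.1.symm)⟩
  · exact ⟨v, if_neg hPv⟩

end IsMVCColoring

theorem stmt_18_general {V : Type*} [Fintype V] (G : SimpleGraph V)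
    (c : V → ℕ) (hc : IsMVCColoring G c) (hext : (Set.range c).ncard = mvc G) :
    ∀ col ∈ Set.range c, (G.induce {v : V | c v = col}).Connected := by
  rintro _ ⟨v, rfl⟩
  refine (connected_iff _).mpr ⟨?_, ⟨⟨v, rfl⟩⟩⟩
  by_contra hpre
  obtain ⟨c', hc', hlt⟩ := hc.exists_ncard_range_lt hpre
  exact (hc'.ncard_range_le_mvc.trans_lt (hext ▸ hlt)).false

theorem stmt_18 {V : Type*} [Fintype V] (G : SimpleGraph V) (hG : G.Connected)
    (c : V → ℕ) (hc : IsMVCColoring G c) (hext : (Set.range c).ncard = mvc G) :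
    ∀ col ∈ Set.range c, (G.induce {v : V | c v = col}).Connected :=
  stmt_18_general G c hc hext
end
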